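/- arXiv:math/0702029 — 4 statements merged into one kernel-verified Lean document; each statement's English description precedes it below -/
import Mathlib

section
/- Theorem on three perpendiculars: let α be a plane in three-dimensional Euclidean space, let O and C be points of α, let B be any point, and let A be the orthogonal projection of B onto α. Then the vector B - O is orthogonal to the vector C - O if and only if the vector A - O is orthogonal to C - O; i.e. ⟪B - O, C - O⟫ = 0 ↔ ⟪A - O, C - O⟫ = 0. -/
namespace EuclideanGeometry

variable {𝕜 V P : Type*} [RCLike 𝕜] [NormedAddCommGroup V] [InnerProductSpace 𝕜 V]
  [MetricSpace P] [NormedAddTorsor V P]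

theorem inner_vsub_left_eq_inner_orthogonalProjection_vsub_left (s : AffineSubspace 𝕜 P)
    [Nonempty s] [s.direction.HasOrthogonalProjection] (p q : P) {v : V}
    (hv : v ∈ s.direction) :
    inner 𝕜 (p -ᵥ q) v = inner 𝕜 ((orthogonalProjection s p : P) -ᵥ q) v := by
  have hperp : inner 𝕜 (p -ᵥ orthogonalProjection s p) v = 0 :=
    Submodule.inner_left_of_mem_orthogonal hv
      (vsub_orthogonalProjection_mem_direction_orthogonal s p)
  rw [← vsub_add_vsub_cancel p (orthogonalProjection s p : P) q, inner_add_left, hperp,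
    zero_add]

end EuclideanGeometry

theorem three_perpendiculars_general
    (α : AffineSubspace ℝ (EuclideanSpace ℝ (Fin 3))) [Nonempty α]
    (O C : EuclideanSpace ℝ (Fin 3)) (hO : O ∈ α) (hC : C ∈ α)
    (B : EuclideanSpace ℝ (Fin 3)) :
    inner ℝ (B - O) (C - O) = (0 : ℝ) ↔
      inner ℝ ((EuclideanGeometry.orthogonalProjection α B : EuclideanSpace ℝ (Fin 3)) - O)
        (C - O) = (0 : ℝ) := by
  simp only [← vsub_eq_sub]
  rw [EuclideanGeometry.inner_vsub_left_eq_inner_orthogonalProjection_vsub_left α B O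
    (AffineSubspace.vsub_mem_direction hC hO)]

/-- Theorem on three perpendiculars: let `α` be a plane in three-dimensional
Euclidean space, `O` and `C` points of `α`, `B` any point, and `A` the
orthogonal projection of `B` onto `α`.  Then `B - O` is orthogonal to `C - O`
if and only if `A - O` is orthogonal to `C - O`. -/
theorem three_perpendiculars
    (α : AffineSubspace ℝ (EuclideanSpace ℝ (Fin 3))) [Nonempty α]
    (hα : Module.finrank ℝ α.direction = 2)
    (O C : EuclideanSpace ℝ (Fin 3)) (hO : O ∈ α) (hC : C ∈ α)
    (B : EuclideanSpace ℝ (Fin 3)) :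
    inner ℝ (B - O) (C - O) = (0 : ℝ) ↔
      inner ℝ ((EuclideanGeometry.orthogonalProjection α B : EuclideanSpace ℝ (Fin 3)) - O)
        (C - O) = (0 : ℝ) :=
  three_perpendiculars_general α O C hO hC B
end

section
/- Rotation axis theorem (even case of the classification of generalized rotations about a point): every linear isometry equivalence f of three-dimensional Euclidean space EuclideanSpace ℝ (Fin 3) whose determinant equals 1 fixes some nonzero vector, i.e. there exists v ≠ 0 with f v = v; consequently every orientation-preserving isometry of space having a fixed point O fixes pointwise an entire straight line through O (its rotation axis). -/
open Matrix

/-- Rotation axis theorem: every linear isometry equivalence of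
three-dimensional Euclidean space whose determinant equals `1`
fixes some nonzero vector (the direction of its rotation axis). -/
theorem rotation_axis
    (f : EuclideanSpace ℝ (Fin 3) ≃ₗᵢ[ℝ] EuclideanSpace ℝ (Fin 3))
    (hf : LinearMap.det (f.toLinearEquiv.toLinearMap) = 1) :
    ∃ v : EuclideanSpace ℝ (Fin 3), v ≠ 0 ∧ f v = v := by
  classical
  set b : OrthonormalBasis (Fin 3) ℝ (EuclideanSpace ℝ (Fin 3)) :=
    EuclideanSpace.basisFun (Fin 3) ℝ with hb
  set T := f.toLinearEquiv.toLinearMap with hT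
  set A := LinearMap.toMatrix b.toBasis b.toBasis T with hA
  have hAeq : A = b.toBasis.toMatrix ⇑(b.map f).toBasis := by
    ext i j
    simp [hA, LinearMap.toMatrix_apply, Module.Basis.toMatrix_apply,
      OrthonormalBasis.coe_toBasis, OrthonormalBasis.map_apply, hT]
  have horth : A ∈ Matrix.orthogonalGroup (Fin 3) ℝ := by
    rw [hAeq]
    exact b.toMatrix_orthonormalBasis_mem_orthogonal (b.map f)
  have hAAT : A * Aᵀ = 1 := by
    have := (Matrix.mem_orthogonalGroup_iff (n := Fin 3) (R := ℝ)).1 horth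
    simpa [Matrix.star_eq_conjTranspose] using this
  have hdetA : A.det = 1 := by
    rw [hA, LinearMap.det_toMatrix]; exact hf
  have hsub : A - 1 = A * (1 - Aᵀ) := by
    rw [mul_sub, mul_one, hAAT]
  have hdet0 : (A - 1).det = 0 := by
    have h1 : (A - 1).det = (1 - A).det := by
      rw [hsub, Matrix.det_mul, hdetA, one_mul, ← Matrix.det_transpose (1 - Aᵀ)]
      congr 1
      simp [Matrix.transpose_sub]
    have h2 : (1 - A).det = -((A - 1).det) := by
      rw [← neg_sub A 1, Matrix.det_neg]
      norm_num
    have := h1.trans h2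
    linarith
  have hdetT : LinearMap.det (T - LinearMap.id) = 0 := by
    rw [← LinearMap.det_toMatrix b.toBasis]
    have : LinearMap.toMatrix b.toBasis b.toBasis (T - LinearMap.id) = A - 1 := by
      rw [map_sub, LinearMap.toMatrix_id, hA]
    rw [this, hdet0]
  obtain ⟨v, hv_mem, hv_ne⟩ :=
    Submodule.exists_mem_ne_zero_of_ne_bot (LinearMap.bot_lt_ker_of_det_eq_zero hdetT).ne'
  refine ⟨v, hv_ne, ?_⟩
  have hv0 : T v - v = 0 := by
    have h0 := LinearMap.mem_ker.1 hv_mem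
    simpa using h0
  have h := sub_eq_zero.1 hv0
  simpa [hT] using h
end

section
/- Uniqueness of the length function: let E be a Euclidean space (e.g. EuclideanSpace ℝ (Fin 3)) and let ℓ : E → E → ℝ satisfy: (1) ℓ O E₀ = 1 for some fixed reference pair with dist O E₀ = 1; (2) ℓ A B > 0 whenever A ≠ B; (3) if dist A B = dist C D then ℓ A B = ℓ C D (congruent segments have equal length); (4) if B lies strictly between A and C then ℓ A C = ℓ A B + ℓ B C. Then ℓ A B = dist A B for all A ≠ B. -/
/-!
Congruence invariance makes `ℓ A B` a function `f` of `dist A B` alone. Laying segments end to end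
on a line turns subdivision additivity into Cauchy's equation `f (s + t) = f s + f t` on the
positive reals, and positivity of `ℓ` makes `f` increasing. An increasing additive function is
linear on the rationals, hence, squeezing between rationals, linear everywhere: `f x = x * f 1`,
and the normalisation `ℓ O E₀ = 1` gives `f 1 = 1`.
-/

open Set AffineMap

section CauchyOnPositives

variable {f : ℝ → ℝ} (hadd : ∀ s t, 0 < s → 0 < t → f (s + t) = f s + f t)
include hadd

theorem strictMonoOn_Ioi_of_map_add_of_pos (hpos : ∀ t, 0 < t → 0 < f t) :
    StrictMonoOn f (Ioi 0) := by
  intro s hs t _ hst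
  have hts : 0 < t - s := sub_pos.2 hst
  calc f s < f s + f (t - s) := lt_add_of_pos_right _ (hpos _ hts)
    _ = f t := by rw [← hadd s _ hs hts, add_sub_cancel]

theorem map_natCast_mul_of_map_add {n : ℕ} (hn : 0 < n) {x : ℝ} (hx : 0 < x) :
    f (n * x) = n * f x := by
  obtain ⟨n, rfl⟩ := Nat.exists_eq_add_one_of_ne_zero hn.ne'
  induction n with
  | zero => simp
  | succ n ih =>
    have hnx : 0 < ((n + 1 : ℕ) : ℝ) * x := by positivity
    rw [Nat.cast_succ, add_one_mul, hadd _ _ hnx hx, ih n.succ_pos, add_one_mul]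

theorem map_ratCast_of_map_add {q : ℚ} (hq : 0 < q) : f q = q * f 1 := by
  obtain ⟨n, hn⟩ := Int.eq_ofNat_of_zero_le (Rat.num_nonneg.2 hq.le)
  have hn_pos : 0 < n := by have := Rat.num_pos.2 hq; omega
  have hq_num_den : (q.den : ℝ) * q = n * 1 := by
    rw [mul_one, ← Int.cast_natCast (R := ℝ) n, ← hn, Rat.cast_def]
    field_simp
  have hden : (0 : ℝ) < q.den := Nat.cast_pos.2 q.den_pos
  have key : (q.den : ℝ) * f q = q.den * (q * f 1) := by
    rw [← map_natCast_mul_of_map_add hadd q.den_pos (Rat.cast_pos.2 hq), hq_num_den,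
      map_natCast_mul_of_map_add hadd hn_pos one_pos, ← mul_assoc, hq_num_den, mul_one]
  exact mul_left_cancel₀ hden.ne' key

theorem eq_mul_map_one_of_map_add_of_pos (hpos : ∀ t, 0 < t → 0 < f t) {x : ℝ} (hx : 0 < x) :
    f x = x * f 1 := by
  have hc : 0 < f 1 := hpos 1 one_pos
  have hmono := strictMonoOn_Ioi_of_map_add_of_pos hadd hpos
  refine le_antisymm (not_lt.1 fun hlt => ?_) (not_lt.1 fun hlt => ?_)
  · obtain ⟨q, hxq, hqf⟩ := exists_rat_btwn ((lt_div_iff₀ hc).2 hlt)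
    have hq : (0 : ℝ) < q := hx.trans hxq
    have hfq := hmono hx hq hxq
    rw [map_ratCast_of_map_add hadd (Rat.cast_pos.1 hq)] at hfq
    linarith [(lt_div_iff₀ hc).1 hqf]
  · obtain ⟨q, hfq, hqx⟩ := exists_rat_btwn ((div_lt_iff₀ hc).2 hlt)
    have hq : (0 : ℝ) < q := (div_pos (hpos x hx) hc).trans hfq
    have hfq' := hmono hq hx hqx
    rw [map_ratCast_of_map_add hadd (Rat.cast_pos.1 hq)] at hfq'
    linarith [(div_lt_iff₀ hc).1 hfq]

end CauchyOnPositives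

section UnitSegment

variable {V P : Type*} [NormedAddCommGroup V] [NormedSpace ℝ V] [MetricSpace P]
  [NormedAddTorsor V P]

theorem sbtw_lineMap_of_lt_of_lt {p q : P} (hpq : p ≠ q) {a b c : ℝ} (hab : a < b) (hbc : b < c) :
    Sbtw ℝ (lineMap p q a) (lineMap p q b) (lineMap p q c) :=
  (lineMap_injective ℝ hpq).sbtw_map_iff.2 (Sbtw.of_lt_of_lt hab hbc)

variable {p q : P} (hpq : dist p q = 1)
include hpq

theorem dist_left_lineMap_of_dist_eq_one {t : ℝ} (ht : 0 ≤ t) : dist p (lineMap p q t) = t := by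
  rw [dist_left_lineMap, hpq, mul_one, Real.norm_of_nonneg ht]

variable {ℓ : P → P → ℝ} (hcong : ∀ A B C D, dist A B = dist C D → ℓ A B = ℓ C D)
include hcong

theorem eq_apply_lineMap_dist (A B : P) : ℓ A B = ℓ p (lineMap p q (dist A B)) :=
  hcong _ _ _ _ (dist_left_lineMap_of_dist_eq_one hpq dist_nonneg).symm

theorem apply_lineMap_add (hsub : ∀ A B C, Sbtw ℝ A B C → ℓ A C = ℓ A B + ℓ B C)
    {s t : ℝ} (hs : 0 < s) (ht : 0 < t) :
    ℓ p (lineMap p q (s + t)) = ℓ p (lineMap p q s) + ℓ p (lineMap p q t) := by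
  have hpq' : p ≠ q := dist_pos.1 (hpq ▸ one_pos)
  have hbtw := sbtw_lineMap_of_lt_of_lt hpq' hs (lt_add_of_pos_right s ht)
  rw [lineMap_apply_zero] at hbtw
  rw [hsub _ _ _ hbtw, hcong (lineMap p q s) (lineMap p q (s + t)) p (lineMap p q t)]
  rw [dist_lineMap_lineMap, hpq, dist_left_lineMap_of_dist_eq_one hpq ht.le, Real.dist_eq]
  simp [abs_of_pos ht]

end UnitSegment

/-- Uniqueness of the length function: a function assigning to each pair of
distinct points a positive real number, which is invariant under congruence
of segments, additive under subdivision of a segment by an interior point,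
and equal to `1` on a fixed reference segment of unit distance, coincides
with the Euclidean distance. -/
theorem length_function_unique
    {E : Type*} [NormedAddCommGroup E] [InnerProductSpace ℝ E]
    (ℓ : E → E → ℝ) (O E₀ : E) (hOE : dist O E₀ = 1)
    (h1 : ℓ O E₀ = 1)
    (h2 : ∀ A B : E, A ≠ B → 0 < ℓ A B)
    (h3 : ∀ A B C D : E, dist A B = dist C D → ℓ A B = ℓ C D)
    (h4 : ∀ A B C : E, Sbtw ℝ A B C → ℓ A C = ℓ A B + ℓ B C) :
    ∀ A B : E, A ≠ B → ℓ A B = dist A B := by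
  set f : ℝ → ℝ := fun t => ℓ O (lineMap O E₀ t)
  have hf_add : ∀ s t, 0 < s → 0 < t → f (s + t) = f s + f t :=
    fun _ _ hs ht => apply_lineMap_add hOE h3 h4 hs ht
  have hf_pos : ∀ t, 0 < t → 0 < f t := fun t ht =>
    h2 _ _ (dist_pos.1 ((dist_left_lineMap_of_dist_eq_one hOE ht.le).symm ▸ ht))
  have hf_one : f 1 = 1 := by simp only [f, lineMap_apply_one, h1]
  intro A B hAB
  rw [eq_apply_lineMap_dist hOE h3 A B]
  change f (dist A B) = dist A B
  rw [eq_mul_map_one_of_map_add_of_pos hf_add hf_pos (dist_pos.2 hAB), hf_one, mul_one]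
end

section
/- Alternate interior angles criterion for parallelism: let A ≠ B be points of the Euclidean plane and let C and D be points lying strictly on opposite sides of the line AB. Then the inner crosswise lying angles are equal, ∠ C A B = ∠ A B D, if and only if the line through A and C is parallel to the line through B and D. -/
open EuclideanGeometry
open scoped InnerProductSpace RealInnerProductSpace

private lemma key_alg {P Q R S nu nv nw : ℝ} (hnu : 0 < nu) (hnv : 0 < nv) (hnw : 0 < nw)
    (h1 : P ^ 2 + Q ^ 2 = nu ^ 2 * nw ^ 2) (h2 : R ^ 2 + S ^ 2 = nv ^ 2 * nw ^ 2)
    (hQS : Q * S < 0) :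
    P / (nu * nw) = -(R / (nw * nv)) ↔ P * S = Q * R := by
  have hQ : Q ≠ 0 := by rintro rfl; simp at hQS
  have hS : S ≠ 0 := by rintro rfl; simp at hQS
  have hQnvSnu : ∀ _ : (Q * nv) ^ 2 = (S * nu) ^ 2, Q * nv = -(S * nu) := by
    intro hsq
    rcases sq_eq_sq_iff_eq_or_eq_neg.mp hsq with hh | hh
    · exfalso
      have h1' : Q * S * nv = S ^ 2 * nu := by linear_combination S * hh
      nlinarith [sq_nonneg S, mul_pos hnu hnv]
    · exact hh
  constructor
  · intro hcos
    have hP : P * nv = -(R * nu) := by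
      field_simp at hcos
      apply mul_right_cancel₀ hnw.ne'
      linear_combination nw * hcos
    have hsq : (Q * nv) ^ 2 = (S * nu) ^ 2 := by
      have e1 : P ^ 2 * nv ^ 2 = R ^ 2 * nu ^ 2 := by
        linear_combination (P * nv - R * nu) * hP
      linear_combination nv ^ 2 * h1 - nu ^ 2 * h2 - e1
    have hQn := hQnvSnu hsq
    apply mul_right_cancel₀ hnv.ne'
    linear_combination S * hP - R * hQn
  · intro hPS
    have hsq' : P ^ 2 * S ^ 2 = Q ^ 2 * R ^ 2 := by linear_combination (P * S + Q * R) * hPS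
    have hsq : (Q * nv) ^ 2 = (S * nu) ^ 2 := by
      apply mul_right_cancel₀ (pow_ne_zero 2 hnw.ne')
      linear_combination S ^ 2 * h1 - Q ^ 2 * h2 - hsq'
    have hQn := hQnvSnu hsq
    have hPn : P * nv = -(R * nu) := by
      apply mul_right_cancel₀ hS
      linear_combination nv * hPS + R * hQn
    field_simp
    linear_combination hPn

set_option maxHeartbeats 1000000 in
/-- Alternate interior angles criterion for parallelism: let `A ≠ B` be points
of the Euclidean plane and let `C`, `D` lie strictly on opposite sides of the
line `AB`.  Then `∠ C A B = ∠ A B D` if and only if the line `AC` is parallel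
to the line `BD`. -/
theorem alternate_interior_angles_iff_parallel
    (A B C D : EuclideanSpace ℝ (Fin 2)) (hAB : A ≠ B)
    (h : AffineSubspace.SOppSide (affineSpan ℝ ({A, B} : Set (EuclideanSpace ℝ (Fin 2)))) C D) :
    ∠ C A B = ∠ A B D ↔
      AffineSubspace.Parallel
        (affineSpan ℝ ({A, C} : Set (EuclideanSpace ℝ (Fin 2))))
        (affineSpan ℝ ({B, D} : Set (EuclideanSpace ℝ (Fin 2)))) := by
  haveI : Fact (Module.finrank ℝ (EuclideanSpace ℝ (Fin 2)) = 2) :=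
    ⟨finrank_euclideanSpace_fin⟩
  let o : Orientation ℝ (EuclideanSpace ℝ (Fin 2)) (Fin 2) := (EuclideanSpace.basisFun (Fin 2) ℝ).toBasis.orientation
  set ω := o.areaForm with hω
  -- if the area form of x with a nonzero y vanishes, x is a multiple of y
  have hdep : ∀ x y : EuclideanSpace ℝ (Fin 2), y ≠ 0 → ω x y = 0 → ∃ r : ℝ, r • y = x := by
    intro x y hy hxy
    rcases le_or_gt 0 (⟪x, y⟫_ℝ) with hi | hi
    · have hsr : SameRay ℝ y x :=
        ((o.nonneg_inner_and_areaForm_eq_zero_iff_sameRay x y).mp ⟨hi, hxy⟩).symm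
      obtain ⟨r, _, hr⟩ := (exists_nonneg_left_iff_sameRay hy).mpr hsr
      exact ⟨r, hr⟩
    · have hi' : 0 ≤ ⟪-x, y⟫_ℝ := by rw [inner_neg_left]; linarith
      have hxy' : ω (-x) y = 0 := by rw [map_neg, LinearMap.neg_apply, hxy, neg_zero]
      have hsr : SameRay ℝ y (-x) :=
        ((o.nonneg_inner_and_areaForm_eq_zero_iff_sameRay (-x) y).mp ⟨hi', hxy'⟩).symm
      obtain ⟨r, _, hr⟩ := (exists_nonneg_left_iff_sameRay hy).mpr hsr
      exact ⟨-r, by rw [neg_smul, hr, neg_neg]⟩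
  set w : (EuclideanSpace ℝ (Fin 2)) := B -ᵥ A with hwdef
  set u : (EuclideanSpace ℝ (Fin 2)) := C -ᵥ A with hudef
  set v : (EuclideanSpace ℝ (Fin 2)) := D -ᵥ B with hvdef
  have hw : w ≠ 0 := vsub_ne_zero.mpr (Ne.symm hAB)
  clear_value w u v
  -- membership in the line AB
  have hmem : ∀ X : EuclideanSpace ℝ (Fin 2), X ∈ affineSpan ℝ ({A, B} : Set (EuclideanSpace ℝ (Fin 2))) ↔ ∃ r : ℝ, r • w = X -ᵥ A := by
    intro X
    constructor
    · intro hX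
      rw [← vsub_vadd X A] at hX
      rw [vadd_left_mem_affineSpan_pair] at hX
      rw [hwdef]
      exact hX
    · rintro ⟨r, hr⟩
      rw [← vsub_vadd X A, vadd_left_mem_affineSpan_pair]
      exact ⟨r, by rw [← hwdef]; exact hr⟩
  have hCnot : C ∉ affineSpan ℝ ({A, B} : Set (EuclideanSpace ℝ (Fin 2))) := h.2.1
  have hDnot : D ∉ affineSpan ℝ ({A, B} : Set (EuclideanSpace ℝ (Fin 2))) := h.2.2
  set Q : ℝ := ω u w with hQdef
  set S : ℝ := ω v w with hSdef
  clear_value Q S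
  have hQ0 : Q ≠ 0 := by
    intro hq
    obtain ⟨r, hr⟩ := hdep u w hw (hQdef.symm.trans hq)
    exact hCnot ((hmem C).mpr ⟨r, hr.trans hudef⟩)
  have hS0 : S ≠ 0 := by
    intro hq
    obtain ⟨r, hr⟩ := hdep v w hw (hSdef.symm.trans hq)
    refine hDnot ((hmem D).mpr ⟨r + 1, ?_⟩)
    have : D -ᵥ A = v + w := by rw [hvdef, hwdef, vsub_add_vsub_cancel]
    rw [this, ← hr, add_smul, one_smul]
  -- opposite sides gives Q * S < 0
  have hQS : Q * S < 0 := by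
    obtain ⟨p₁, hp₁, p₂, hp₂, hray⟩ := h.1
    obtain ⟨r₁, hr₁⟩ := (hmem p₁).mp hp₁
    obtain ⟨r₂, hr₂⟩ := (hmem p₂).mp hp₂
    have hx : ω (C -ᵥ p₁) w = Q := by
      have : C -ᵥ p₁ = u - r₁ • w := by
        rw [hr₁, hudef, vsub_sub_vsub_cancel_right]
      rw [this, map_sub, LinearMap.sub_apply, map_smul, LinearMap.smul_apply,
        o.areaForm_apply_self, smul_zero, sub_zero, ← hQdef]
    have hy : ω (p₂ -ᵥ D) w = -S := by
      have : p₂ -ᵥ D = r₂ • w - (v + w) := by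
        rw [hr₂, hvdef, hwdef, vsub_add_vsub_cancel, vsub_sub_vsub_cancel_right]
      rw [this, map_sub, LinearMap.sub_apply, map_smul, LinearMap.smul_apply,
        o.areaForm_apply_self, smul_zero, map_add, LinearMap.add_apply,
        o.areaForm_apply_self, add_zero, zero_sub, hSdef]
    have hx0 : C -ᵥ p₁ ≠ 0 := by
      intro hh; rw [hh] at hx; simp at hx; exact hQ0 hx.symm
    have hy0 : p₂ -ᵥ D ≠ 0 := by
      intro hh; rw [hh] at hy; simp at hy
      exact hS0 (by linarith [hy.symm] : S = 0)
    obtain ⟨a, b, ha, hb, hab⟩ := hray.exists_pos hx0 hy0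
    have h1 : a • (ω (C -ᵥ p₁) w) = b • (ω (p₂ -ᵥ D) w) := by
      rw [← LinearMap.smul_apply, ← map_smul, hab, map_smul, LinearMap.smul_apply]
    rw [hx, hy, smul_eq_mul, smul_eq_mul] at h1
    have hS2 : 0 < S ^ 2 := lt_of_le_of_ne (sq_nonneg S) (Ne.symm (pow_ne_zero 2 hS0))
    have h2 : a * (Q * S) = -(b * S ^ 2) := by linear_combination S * h1
    nlinarith [mul_pos hb hS2, ha, h2]
  -- nonzero vectors u, v
  have hu : u ≠ 0 := by
    intro hh
    exact hCnot ((hmem C).mpr ⟨0, by rw [zero_smul, ← hudef, hh]⟩)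
  have hv : v ≠ 0 := by
    intro hh
    refine hDnot ((hmem D).mpr ⟨1, ?_⟩)
    have : D -ᵥ A = v + w := by rw [hvdef, hwdef, vsub_add_vsub_cancel]
    rw [this, hh, zero_add, one_smul]
  set P : ℝ := ⟪u, w⟫_ℝ with hPdef
  set R : ℝ := ⟪v, w⟫_ℝ with hRdef
  -- Parallel ↔ P * S = Q * R
  have hpar : (AffineSubspace.Parallel
        (affineSpan ℝ ({A, C} : Set (EuclideanSpace ℝ (Fin 2)))) (affineSpan ℝ ({B, D} : Set (EuclideanSpace ℝ (Fin 2))))) ↔ P * S = Q * R := by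
    rw [AffineSubspace.affineSpan_pair_parallel_iff_vectorSpan_eq,
      vectorSpan_pair_rev ℝ A C, vectorSpan_pair_rev ℝ B D, ← hudef, ← hvdef]
    have hkey : ω u v = 0 ↔ P * S = Q * R := by
      have hid := o.inner_mul_areaForm_sub w u v
      have hwu : ω w u = -Q := by rw [hω, o.areaForm_swap w u, ← hω, ← hQdef]
      have hwv : ω w v = -S := by rw [hω, o.areaForm_swap w v, ← hω, ← hSdef]
      have hiwu : ⟪w, u⟫_ℝ = P := by rw [real_inner_comm, ← hPdef]
      have hiwv : ⟪w, v⟫_ℝ = R := by rw [real_inner_comm, ← hRdef]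
      rw [hwu, hwv, hiwu, hiwv] at hid
      constructor
      · intro hz
        rw [hz, mul_zero] at hid
        linarith [hid]
      · intro hpsqr
        have hnw : (0:ℝ) < ‖w‖ ^ 2 := pow_pos (norm_pos_iff.mpr hw) 2
        have : ‖w‖ ^ 2 * ω u v = 0 := by rw [← hid]; linarith [hpsqr]
        exact (mul_eq_zero.mp this).resolve_left (ne_of_gt hnw)
    rw [← hkey]
    constructor
    · intro hspan
      have : u ∈ (ℝ ∙ v : Submodule ℝ (EuclideanSpace ℝ (Fin 2))) := by
        rw [← hspan]; exact Submodule.mem_span_singleton_self u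
      obtain ⟨r, hr⟩ := Submodule.mem_span_singleton.mp this
      rw [← hr, map_smul, LinearMap.smul_apply, o.areaForm_apply_self, smul_zero]
    · intro hz
      have hvu : ω v u = 0 := by rw [hω, o.areaForm_swap v u, ← hω, hz, neg_zero]
      obtain ⟨r, hr⟩ := hdep v u hu hvu
      have hr0 : r ≠ 0 := by rintro rfl; rw [zero_smul] at hr; exact hv hr.symm
      apply le_antisymm
      · rw [Submodule.span_singleton_le_iff_mem]
        have hu' : u = r⁻¹ • v := by
          rw [← hr, smul_smul, inv_mul_cancel₀ hr0, one_smul]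
        rw [hu']
        exact Submodule.smul_mem _ _ (Submodule.mem_span_singleton_self v)
      · rw [Submodule.span_singleton_le_iff_mem, ← hr]
        exact Submodule.smul_mem _ _ (Submodule.mem_span_singleton_self u)
  -- angles ↔ cosine equation
  have hnu : (0:ℝ) < ‖u‖ := norm_pos_iff.mpr hu
  have hnv : (0:ℝ) < ‖v‖ := norm_pos_iff.mpr hv
  have hnw : (0:ℝ) < ‖w‖ := norm_pos_iff.mpr hw
  have hangle : (∠ C A B = ∠ A B D) ↔ P / (‖u‖ * ‖w‖) = -(R / (‖w‖ * ‖v‖)) := by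
    have e1 : ∠ C A B = InnerProductGeometry.angle u w := by
      rw [show (∠ C A B) = InnerProductGeometry.angle (C -ᵥ A) (B -ᵥ A) from rfl,
        ← hudef, ← hwdef]
    have e2 : ∠ A B D = InnerProductGeometry.angle (-w) v := by
      have hA : A -ᵥ B = -w := by rw [hwdef, neg_vsub_eq_vsub_rev]
      rw [show (∠ A B D) = InnerProductGeometry.angle (A -ᵥ B) (D -ᵥ B) from rfl,
        hA, ← hvdef]
    have c1 : Real.cos (InnerProductGeometry.angle u w) = P / (‖u‖ * ‖w‖) :=
      InnerProductGeometry.cos_angle u w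
    have c2 : Real.cos (InnerProductGeometry.angle (-w) v) = -(R / (‖w‖ * ‖v‖)) := by
      rw [InnerProductGeometry.cos_angle, inner_neg_left, norm_neg, real_inner_comm v w,
        ← hRdef, neg_div]
    rw [e1, e2]
    constructor
    · intro hh
      rw [← c1, ← c2, hh]
    · intro hh
      apply Real.injOn_cos
        ⟨InnerProductGeometry.angle_nonneg _ _, InnerProductGeometry.angle_le_pi _ _⟩
        ⟨InnerProductGeometry.angle_nonneg _ _, InnerProductGeometry.angle_le_pi _ _⟩
      rw [c1, c2, hh]
  rw [hangle, hpar]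
  exact key_alg hnu hnv hnw (by
      have := o.inner_sq_add_areaForm_sq u w
      rw [← hω, ← hPdef, ← hQdef] at this
      linarith [this])
    (by
      have := o.inner_sq_add_areaForm_sq v w
      rw [← hω, ← hRdef, ← hSdef] at this
      linarith [this]) hQS
end
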